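/- arXiv:2405.03449 — 2 statements merged into one kernel-verified Lean document; each statement's English description precedes it below -/
import Mathlib

section
/- Let V be a finite set with |V| = n ≥ 2, let E_h index the unordered pairs of distinct elements of V, and let C_h ∈ ℝ^{V×E_h} be the signed incidence matrix of the complete graph on V (the column of the pair {i,j} equals e_i − e_j for a fixed orientation, where e_i are the standard basis vectors of ℝ^V). Let E_b be a finite set with |E_b| = m_b, and let C_b ∈ ℝ^{V×E_b} be a matrix each of whose columns is a standard basis vector of ℝ^V; assume each i ∈ V appears as a column of C_b exactly N_b times (so m_b = n·N_b). Then for every matrix U ∈ ℝ^{E_b×d} all of whose rows have 2-norm at most 1, every row of the matrix (1/n)·C_hᵀ C_b U has 2-norm at most (2N_b/n)·√(min(d, n·N_b)). -/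
open Finset

/-- Euclidean norm of a row vector in `ℝ^d`. -/
noncomputable def rnorm {d : ℕ} (x : Fin d → ℝ) : ℝ :=
  Real.sqrt (∑ k, (x k) ^ 2)

/-- `clip(x; τ)`: projection of `x` onto the Euclidean ball of radius `τ`. -/
noncomputable def clipVec {d : ℕ} (τ : ℝ) (x : Fin d → ℝ) : Fin d → ℝ :=
  if rnorm x ≤ τ then x else (τ / rnorm x) • x

/-- Row-wise clipping of a matrix. -/
noncomputable def clipMat {E : Type*} {d : ℕ} (τ : ℝ) (M : Matrix E (Fin d) ℝ) :
    Matrix E (Fin d) ℝ :=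
  Matrix.of fun e => clipVec τ (M e)

/-- Frobenius inner product. -/
noncomputable def frobIP {V : Type*} [Fintype V] {d : ℕ} (M N : Matrix V (Fin d) ℝ) : ℝ :=
  ∑ v, ∑ k, M v k * N v k

/-- Frobenius norm. -/
noncomputable def frobNorm {V : Type*} [Fintype V] {d : ℕ} (M : Matrix V (Fin d) ℝ) : ℝ :=
  Real.sqrt (∑ v, ∑ k, (M v k) ^ 2)

lemma rnorm_eq_norm {d : ℕ} (x : Fin d → ℝ) :
    rnorm x = ‖(WithLp.equiv 2 (Fin d → ℝ)).symm x‖ := by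
  rw [rnorm, EuclideanSpace.norm_eq]
  congr 1
  refine Finset.sum_congr rfl fun k _ => ?_
  rw [Real.norm_eq_abs, sq_abs]
  rfl

lemma rnorm_nonneg {d : ℕ} (x : Fin d → ℝ) : 0 ≤ rnorm x := Real.sqrt_nonneg _

lemma rnorm_sub_le {d : ℕ} (x y : Fin d → ℝ) : rnorm (x - y) ≤ rnorm x + rnorm y := by
  rw [rnorm_eq_norm, rnorm_eq_norm, rnorm_eq_norm]
  exact norm_sub_le _ _

lemma rnorm_smul {d : ℕ} (c : ℝ) (x : Fin d → ℝ) : rnorm (c • x) = |c| * rnorm x := by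
  rw [rnorm_eq_norm, rnorm_eq_norm]
  rw [show (WithLp.equiv 2 (Fin d → ℝ)).symm (c • x)
      = c • (WithLp.equiv 2 (Fin d → ℝ)).symm x from rfl]
  rw [norm_smul, Real.norm_eq_abs]

lemma rnorm_sum_le {d : ℕ} {E : Type*} (s : Finset E) (f : E → Fin d → ℝ) :
    rnorm (∑ i ∈ s, f i) ≤ ∑ i ∈ s, rnorm (f i) := by
  simp only [rnorm_eq_norm]
  rw [show (WithLp.equiv 2 (Fin d → ℝ)).symm (∑ i ∈ s, f i)
      = ∑ i ∈ s, (WithLp.equiv 2 (Fin d → ℝ)).symm (f i) from by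
    simp [WithLp.equiv]]
  exact norm_sum_le _ _

/-- Bound on the Byzantine amplification factor `Δ_∞` for a fully connected honest graph:
every row of `(1/n)·C_hᵀ C_b U` has 2-norm at most `(2N_b/n)·√(min(d, n·N_b))`. -/
theorem delta_infty_bound_complete_graph
    {d : ℕ} (hd : 1 ≤ d)
    {V Eh Eb : Type*} [Fintype V] [Fintype Eh] [Fintype Eb] [DecidableEq V]
    (hn : 2 ≤ Fintype.card V)
    -- `E_h` indexes the unordered pairs of distinct elements of `V`, via a fixed orientation
    (σ θ : Eh → V) (hσθ : ∀ e, σ e ≠ θ e)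
    (hpairs_inj : ∀ e e' : Eh, ({σ e, θ e} : Finset V) = {σ e', θ e'} → e = e')
    (hpairs_surj : ∀ i j : V, i ≠ j → ∃ e : Eh, ({σ e, θ e} : Finset V) = {i, j})
    -- `C_h` is the signed incidence matrix of the complete graph on `V`
    (Ch : Matrix V Eh ℝ)
    (hCh : ∀ v e, Ch v e = (if v = θ e then (1 : ℝ) else 0) - (if v = σ e then 1 else 0))
    -- each column of `C_b` is a standard basis vector, each vertex appearing `N_b` times
    (β : Eb → V) (Cb : Matrix V Eb ℝ)
    (hCb : ∀ v e, Cb v e = if v = β e then (1 : ℝ) else 0)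
    (Nb : ℕ) (hNb : ∀ v : V, (Finset.univ.filter (fun e => β e = v)).card = Nb)
    (hmb : Fintype.card Eb = Fintype.card V * Nb)
    (U : Matrix Eb (Fin d) ℝ) (hU : ∀ e, rnorm (U e) ≤ 1) :
    ∀ e : Eh,
      rnorm (fun k => (1 / (Fintype.card V : ℝ)) * (Ch.transpose * (Cb * U)) e k) ≤
        (2 * (Nb : ℝ) / (Fintype.card V : ℝ)) *
          Real.sqrt (min (d : ℝ) ((Fintype.card V : ℝ) * (Nb : ℝ))) := by
  intro e
  set n : ℕ := Fintype.card V with hn'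
  have hnpos : (0:ℝ) < (n:ℝ) := by
    have : 0 < n := lt_of_lt_of_le (by norm_num) hn
    exact_mod_cast this
  set A : Finset Eb := univ.filter (fun e' => β e' = θ e) with hA
  set B : Finset Eb := univ.filter (fun e' => β e' = σ e) with hB
  set Sθ : Fin d → ℝ := ∑ e' ∈ A, U e' with hSθdef
  set Sσ : Fin d → ℝ := ∑ e' ∈ B, U e' with hSσdef
  have hg : ∀ v k, (Cb * U) v k = ∑ e' ∈ univ.filter (fun e' => β e' = v), U e' k := by
    intro v k
    rw [Matrix.mul_apply, Finset.sum_filter]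
    refine Finset.sum_congr rfl fun e' _ => ?_
    rw [hCb]
    by_cases h : β e' = v
    · simp [h]
    · simp [h, Ne.symm h]
  have hrow : (fun k => (1 / (n : ℝ)) * (Ch.transpose * (Cb * U)) e k)
      = (1 / (n:ℝ)) • (Sθ - Sσ) := by
    funext k
    simp only [Pi.smul_apply, Pi.sub_apply, smul_eq_mul]
    congr 1
    rw [Matrix.mul_apply]
    have : ∀ v, Ch.transpose e v * (Cb * U) v k
        = (if v = θ e then (Cb * U) v k else 0) - (if v = σ e then (Cb * U) v k else 0) := by
      intro v
      rw [Matrix.transpose_apply, hCh, sub_mul]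
      by_cases h1 : v = θ e <;> by_cases h2 : v = σ e <;> simp [h1, h2]
    rw [Finset.sum_congr rfl fun v _ => this v, Finset.sum_sub_distrib,
      Finset.sum_ite_eq' univ (θ e), Finset.sum_ite_eq' univ (σ e)]
    simp only [Finset.mem_univ, if_true]
    rw [hg, hg, hSθdef, hSσdef]
    exact congrArg₂ _ (Finset.sum_apply k _ _).symm (Finset.sum_apply k _ _).symm
  rw [hrow]
  have hSθle : rnorm Sθ ≤ (Nb : ℝ) := by
    calc rnorm Sθ ≤ ∑ e' ∈ A, rnorm (U e') := rnorm_sum_le A _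
    _ ≤ ∑ _e' ∈ A, (1:ℝ) := Finset.sum_le_sum fun e' _ => hU e'
    _ = (A.card : ℝ) := by simp
    _ = (Nb : ℝ) := by rw [hA, hNb]
  have hSσle : rnorm Sσ ≤ (Nb : ℝ) := by
    calc rnorm Sσ ≤ ∑ e' ∈ B, rnorm (U e') := rnorm_sum_le B _
    _ ≤ ∑ _e' ∈ B, (1:ℝ) := Finset.sum_le_sum fun e' _ => hU e'
    _ = (B.card : ℝ) := by simp
    _ = (Nb : ℝ) := by rw [hB, hNb]
  have hmain : rnorm ((1 / (n:ℝ)) • (Sθ - Sσ)) ≤ (1 / (n:ℝ)) * (2 * (Nb:ℝ)) := by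
    rw [rnorm_smul, abs_of_pos (by positivity)]
    refine mul_le_mul_of_nonneg_left ?_ (by positivity)
    calc rnorm (Sθ - Sσ) ≤ rnorm Sθ + rnorm Sσ := rnorm_sub_le _ _
    _ ≤ (Nb:ℝ) + (Nb:ℝ) := add_le_add hSθle hSσle
    _ = 2 * (Nb:ℝ) := by ring
  refine hmain.trans ?_
  rcases Nat.eq_zero_or_pos Nb with h0 | hpos
  · subst h0; simp
  · have h1 : (1:ℝ) ≤ Real.sqrt (min (d : ℝ) ((n : ℝ) * (Nb : ℝ))) := by
      rw [show (1:ℝ) = Real.sqrt 1 from (Real.sqrt_one).symm]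
      apply Real.sqrt_le_sqrt
      refine le_min ?_ ?_
      · exact_mod_cast hd
      · have : (1:ℝ) * 1 ≤ (n:ℝ) * (Nb:ℝ) := by
          apply mul_le_mul
          · exact_mod_cast le_trans (by norm_num) hn
          · exact_mod_cast hpos
          · norm_num
          · positivity
        linarith
    calc (1 / (n:ℝ)) * (2 * (Nb:ℝ)) = (2 * (Nb:ℝ) / (n:ℝ)) * 1 := by ring
    _ ≤ (2 * (Nb:ℝ) / (n:ℝ)) * Real.sqrt (min (d : ℝ) ((n : ℝ) * (Nb : ℝ))) := by
        apply mul_le_mul_of_nonneg_left h1 (by positivity)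
end

section
/- Let V and E be finite sets with |V| = n ≥ 1, d ≥ 1, and let C ∈ ℝ^{V×E} satisfy 𝟙ᵀC = 0, with L := CCᵀ. Let Z, E ∈ ℝ^{V×d}, η ∈ ℝ, Z' = (I − ηL)Z + ηE, Z̄ = (1/n)𝟙𝟙ᵀZ and Z̄' = (1/n)𝟙𝟙ᵀZ'. Then ‖Z'‖_F² = ‖Z‖_F² + η²‖LZ − E‖_F² − 2η‖CᵀZ‖_F² + 2η⟨Z − Z̄, E⟩_F + 2⟨Z̄, Z̄' − Z̄⟩_F. -/
open Finset

private lemma sum_swap3 {α β γ : Type*} [Fintype α] [Fintype β] [Fintype γ]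
    (f : α → β → γ → ℝ) :
    ∑ a, ∑ b, ∑ c, f a b c = ∑ c, ∑ b, ∑ a, f a b c := by
  calc ∑ a, ∑ b, ∑ c, f a b c = ∑ b, ∑ a, ∑ c, f a b c := Finset.sum_comm
    _ = ∑ b, ∑ c, ∑ a, f a b c :=
        Finset.sum_congr rfl fun b _ => Finset.sum_comm
    _ = ∑ c, ∑ b, ∑ a, f a b c := Finset.sum_comm

/-- Complete sufficient-decrease identity, combining the variance identity with the bias
of the mean. -/
theorem complete_decrease_identity
    {d : ℕ} {V E : Type*} [Fintype V] [Fintype E] [DecidableEq V]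
    (hn : 1 ≤ Fintype.card V)
    (C : Matrix V E ℝ) (hC : ∀ e, ∑ v, C v e = 0)
    (Z Err : Matrix V (Fin d) ℝ) (η : ℝ)
    (Z' : Matrix V (Fin d) ℝ)
    (hZ' : Z' = ((1 : Matrix V V ℝ) - η • (C * C.transpose)) * Z + η • Err)
    (Zbar Zbar' : Matrix V (Fin d) ℝ)
    (hZbar : Zbar = Matrix.of fun _ k => (1 / (Fintype.card V : ℝ)) * ∑ w, Z w k)
    (hZbar' : Zbar' = Matrix.of fun _ k => (1 / (Fintype.card V : ℝ)) * ∑ w, Z' w k) :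
    frobIP Z' Z' =
      frobIP Z Z
        + η ^ 2 * frobIP ((C * C.transpose) * Z - Err) ((C * C.transpose) * Z - Err)
        - 2 * η * frobIP (C.transpose * Z) (C.transpose * Z)
        + 2 * η * frobIP (Z - Zbar) Err
        + 2 * frobIP Zbar (Zbar' - Zbar) := by
  set A : Matrix V (Fin d) ℝ := (C * C.transpose) * Z with hA
  set W : Matrix E (Fin d) ℝ := C.transpose * Z with hW
  have hncard : ((Fintype.card V : ℝ)) ≠ 0 := by
    have : (0:ℝ) < Fintype.card V := by exact_mod_cast hn
    linarith
  -- entrywise formula for Z'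
  have hZ'entry : ∀ v k, Z' v k = Z v k - η * (A v k - Err v k) := by
    intro v k
    rw [hZ']
    simp [Matrix.sub_mul, Matrix.smul_mul, Matrix.sub_apply, Matrix.add_apply,
      Matrix.smul_apply, Matrix.one_mul, hA, smul_eq_mul]
    ring
  -- L1 : ⟨Z, A⟩ = ‖CᵀZ‖²
  have L1 : frobIP Z A = ∑ e, ∑ k, W e k * W e k := by
    have hAassoc : A = C * W := by rw [hA, hW, Matrix.mul_assoc]
    have hstep : frobIP Z (C * W) = ∑ v, ∑ k, ∑ e, Z v k * (C v e * W e k) := by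
      simp [frobIP, Matrix.mul_apply, Finset.mul_sum]
    rw [← hAassoc] at hstep
    rw [hstep, sum_swap3]
    refine Finset.sum_congr rfl fun e _ => Finset.sum_congr rfl fun k _ => ?_
    have hWek : W e k = ∑ v, C v e * Z v k := by
      simp [hW, Matrix.mul_apply, Matrix.transpose_apply]
    calc ∑ v, Z v k * (C v e * W e k) = (∑ v, C v e * Z v k) * W e k := by
          simp only [Finset.sum_mul]
          exact Finset.sum_congr rfl fun v _ => by ring
      _ = W e k * W e k := by rw [← hWek]
  -- L2 : column sums of A vanish
  have L2 : ∀ k, ∑ w, A w k = 0 := by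
    intro k
    have hAassoc : A = C * W := by rw [hA, hW, Matrix.mul_assoc]
    simp only [hAassoc, Matrix.mul_apply]
    rw [Finset.sum_comm]
    refine Finset.sum_eq_zero fun e _ => ?_
    rw [← Finset.sum_mul, hC e, zero_mul]
  -- L3 : ⟨Zbar, Zbar' - Zbar⟩ = η ⟨Zbar, Err⟩
  have L3 : frobIP Zbar (Zbar' - Zbar) = η * frobIP Zbar Err := by
    have hdiff : ∀ v k, Zbar' v k - Zbar v k
        = (1 / (Fintype.card V : ℝ)) * (η * ∑ w, Err w k) := by
      intro v k
      rw [hZbar', hZbar]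
      simp only [Matrix.of_apply]
      rw [← mul_sub, ← Finset.sum_sub_distrib]
      congr 1
      have : ∀ w, Z' w k - Z w k = -η * (A w k - Err w k) := by
        intro w; rw [hZ'entry]; ring
      simp only [this]
      calc ∑ x, -η * (A x k - Err x k) = -η * ∑ x, (A x k - Err x k) :=
            (Finset.mul_sum _ _ _).symm
        _ = -η * ((∑ x, A x k) - ∑ x, Err x k) := by rw [Finset.sum_sub_distrib]
        _ = η * ∑ w, Err w k := by rw [L2 k]; ring
    simp only [frobIP, Matrix.sub_apply, hdiff]
    simp only [hZbar, Matrix.of_apply]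
    conv_lhs => rw [Finset.sum_comm]
    conv_rhs => rw [Finset.sum_comm, Finset.mul_sum]
    refine Finset.sum_congr rfl fun k _ => ?_
    rw [Finset.sum_const, Finset.card_univ, nsmul_eq_mul, ← Finset.mul_sum]
    field_simp
  -- expansion of ‖Z'‖²
  have e1 : frobIP Z' Z' = frobIP Z Z + η ^ 2 * frobIP (A - Err) (A - Err)
      - 2 * η * (frobIP Z A - frobIP Z Err) := by
    have h : ∀ v k, Z' v k * Z' v k
        = Z v k * Z v k + η ^ 2 * ((A v k - Err v k) * (A v k - Err v k))
          - 2 * η * (Z v k * A v k - Z v k * Err v k) := by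
      intro v k; rw [hZ'entry]; ring
    simp only [frobIP, h, Matrix.sub_apply, Finset.sum_add_distrib,
      Finset.sum_sub_distrib, Finset.mul_sum, mul_sub]
  -- split ⟨Z - Zbar, Err⟩
  have hsub : frobIP (Z - Zbar) Err = frobIP Z Err - frobIP Zbar Err := by
    simp [frobIP, Matrix.sub_apply, sub_mul, Finset.sum_sub_distrib]
  have L1' : frobIP Z A = frobIP W W := by rw [L1]; rfl
  rw [e1, L1', hsub, L3]
  ring
end
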